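/- arXiv:1510.02224 — 2 statements merged into one kernel-verified Lean document; each statement's English description precedes it below -/
import Mathlib

section
/- Let I = [a,b], let A : ℝ → M₂(ℍ) be continuous on I, and let x₁, x₂ be solutions of x' = A(t)x on I with Wronskian W(t) = ddet M(t), where M(t) has columns x₁(t), x₂(t). If W(t₀) = 0 for some t₀ ∈ I, then x₁ and x₂ are right linearly dependent on I: there exist quaternions q₁, q₂, not both zero, with x₁(t)q₁ + x₂(t)q₂ = 0 for all t ∈ I. -/
open Matrix

/-- The double determinant of a 2×2 quaternion matrix. -/
noncomputable def ddet (M : Matrix (Fin 2) (Fin 2) (Quaternion ℝ)) : Quaternion ℝ :=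
  (M * Mᴴ) 0 0 * (M * Mᴴ) 1 1 - (M * Mᴴ) 0 1 * (M * Mᴴ) 1 0

/-!
Write `(p, q)`, `(r, s)` for the rows of `M(t₀)`. If `q ≠ 0`, the vector `(q̄q, -q̄p)` lies in the
right kernel of `M(t₀)`: the first row annihilates it because `q̄q = qq̄` is real, and the second
row yields a quaternion `X` with `X X̄ = q̄q · ddet M(t₀) = 0`. (If `q = 0`, swap the rows, which
leaves `ddet` unchanged; if `q = s = 0`, take `(0, 1)`.) With the kernel vector `(q₁, q₂)`, the
combination `x₁ q₁ + x₂ q₂` is again a solution, since `A(t)` acts on the left, and it vanishes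
at `t₀`; as `x ↦ A(t) x` is uniformly Lipschitz on the compact interval, uniqueness of solutions
makes it vanish on `[a, b]`.
-/

open Set NNReal

section ODE

variable {E : Type*} [NormedAddCommGroup E] [NormedSpace ℝ E]
  {v : ℝ → E → E} {K : ℝ≥0} {f g : ℝ → E} {a b t₀ : ℝ}

theorem ODE_solution_unique_of_hasDerivAt_Icc (hv : ∀ t ∈ Icc a b, LipschitzWith K (v t))
    (ht₀ : t₀ ∈ Icc a b) (hf : ∀ t ∈ Icc a b, HasDerivAt f (v t (f t)) t)
    (hg : ∀ t ∈ Icc a b, HasDerivAt g (v t (g t)) t) (heq : f t₀ = g t₀) :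
    EqOn f g (Icc a b) := by
  have hl : Icc a t₀ ⊆ Icc a b := Icc_subset_Icc_right ht₀.2
  have hr : Icc t₀ b ⊆ Icc a b := Icc_subset_Icc_left ht₀.1
  rw [← Icc_union_Icc_eq_Icc ht₀.1 ht₀.2]
  refine EqOn.union ?_ ?_
  · have hs : Ioc a t₀ ⊆ Icc a b := Ioc_subset_Icc_self.trans hl
    exact ODE_solution_unique_of_mem_Icc_left (s := fun _ => univ)
      (fun t ht => (hv t (hs ht)).lipschitzOnWith)
      (HasDerivAt.continuousOn fun t ht => hf t (hl ht))
      (fun t ht => (hf t (hs ht)).hasDerivWithinAt) (fun _ _ => trivial)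
      (HasDerivAt.continuousOn fun t ht => hg t (hl ht))
      (fun t ht => (hg t (hs ht)).hasDerivWithinAt) (fun _ _ => trivial) heq
  · have hs : Ico t₀ b ⊆ Icc a b := Ico_subset_Icc_self.trans hr
    exact ODE_solution_unique_of_mem_Icc_right (s := fun _ => univ)
      (fun t ht => (hv t (hs ht)).lipschitzOnWith)
      (HasDerivAt.continuousOn fun t ht => hf t (hr ht))
      (fun t ht => (hf t (hs ht)).hasDerivWithinAt) (fun _ _ => trivial)
      (HasDerivAt.continuousOn fun t ht => hg t (hr ht))
      (fun t ht => (hg t (hs ht)).hasDerivWithinAt) (fun _ _ => trivial) heq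

end ODE

section LinearODE

variable {n R : Type*} [Fintype n]

theorem exists_lipschitzWith_mulVec_of_continuousOn {α : Type*} [TopologicalSpace α]
    [SeminormedRing R] {A : α → Matrix n n R} {s : Set α} (hs : IsCompact s)
    (hA : ContinuousOn A s) : ∃ K : ℝ≥0, ∀ t ∈ s, LipschitzWith K (A t *ᵥ ·) := by
  let _ : SeminormedAddCommGroup (Matrix n n R) := Matrix.linftyOpSeminormedAddCommGroup
  obtain ⟨C, hC⟩ := hs.exists_bound_of_continuousOn hA
  refine ⟨C.toNNReal, fun t ht => LipschitzWith.of_dist_le_mul fun u w => ?_⟩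
  rw [dist_eq_norm, dist_eq_norm, ← mulVec_sub]
  calc ‖A t *ᵥ (u - w)‖ ≤ ‖A t‖ * ‖u - w‖ := linfty_opNorm_mulVec _ _
    _ ≤ C.toNNReal * ‖u - w‖ := by gcongr; exact (hC t ht).trans (Real.le_coe_toNNReal C)

variable [NormedRing R] [NormedAlgebra ℝ R] {a b t₀ : ℝ}

theorem eqOn_zero_of_hasDerivAt_mulVec {A : ℝ → Matrix n n R} {y : ℝ → n → R}
    (hA : ContinuousOn A (Icc a b)) (hy : ∀ t ∈ Icc a b, HasDerivAt y (A t *ᵥ y t) t)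
    (ht₀ : t₀ ∈ Icc a b) (hy₀ : y t₀ = 0) : EqOn y 0 (Icc a b) := by
  obtain ⟨K, hK⟩ := exists_lipschitzWith_mulVec_of_continuousOn isCompact_Icc hA
  exact ODE_solution_unique_of_hasDerivAt_Icc hK ht₀ hy (fun t _ => by simp) hy₀

theorem hasDerivAt_mulVec_mul_const_add_mul_const {A : Matrix n n R} {x₁ x₂ : ℝ → n → R} {t : ℝ}
    (hx₁ : HasDerivAt x₁ (A *ᵥ x₁ t) t) (hx₂ : HasDerivAt x₂ (A *ᵥ x₂ t) t) (q₁ q₂ : R) :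
    HasDerivAt (fun s i => x₁ s i * q₁ + x₂ s i * q₂)
      (A *ᵥ fun i => x₁ t i * q₁ + x₂ t i * q₂) t := by
  -- `MulOpposite.op q • x` is `fun i => x i * q` by definition.
  have h := (hx₁.const_smul (MulOpposite.op q₁)).add (hx₂.const_smul (MulOpposite.op q₂))
  rwa [← mulVec_smul, ← mulVec_smul, ← mulVec_add] at h

end LinearODE

section DoubleDeterminant

open Quaternion

theorem ddet_fin_two_of (p q r s : ℍ[ℝ]) :
    ddet !![p, q; r, s] = (p * star p + q * star q) * (r * star r + s * star s) -
      (p * star r + q * star s) * (r * star p + s * star q) := by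
  simp [ddet, Matrix.mul_apply, Fin.sum_univ_two]

theorem ddet_swap_rows (p q r s : ℍ[ℝ]) : ddet !![r, s; p, q] = ddet !![p, q; r, s] := by
  have hw : r * star p + s * star q = star (p * star r + q * star s) := by simp
  rw [ddet_fin_two_of, ddet_fin_two_of, hw]
  simp only [self_mul_star, star_mul_self, ← coe_add, ← coe_mul, mul_comm]

theorem residual_mul_star_eq_mul_ddet (p q r s : ℍ[ℝ]) :
    (r * (star q * q) - s * (star q * p)) * star (r * (star q * q) - s * (star q * p)) =
      star q * q * ddet !![p, q; r, s] := by
  rw [ddet_fin_two_of]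
  ext <;> simp [re_mul, imI_mul, imJ_mul, imK_mul] <;> ring

theorem exists_mulVec_eq_zero_of_ddet_eq_zero_of_ne_zero {p q r s : ℍ[ℝ]} (hq : q ≠ 0)
    (h : ddet !![p, q; r, s] = 0) : ∃ v ≠ 0, !![p, q; r, s] *ᵥ v = 0 := by
  refine ⟨![star q * q, -(star q * p)], fun hv => hq ?_, ?_⟩
  · simpa using congr_fun hv 0
  · have h₀ : p * (star q * q) - q * (star q * p) = 0 := by
      rw [star_mul_self, ← mul_assoc, self_mul_star, coe_commutes, sub_self]
    have h₁ : r * (star q * q) - s * (star q * p) = 0 := by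
      have := residual_mul_star_eq_mul_ddet p q r s
      rw [h, mul_zero, self_mul_star] at this
      exact normSq_eq_zero.1 (coe_inj.1 (this.trans coe_zero.symm))
    simp [← sub_eq_add_neg, h₀, h₁]

theorem exists_mulVec_eq_zero_of_ddet_eq_zero {M : Matrix (Fin 2) (Fin 2) ℍ[ℝ]}
    (h : ddet M = 0) : ∃ v ≠ 0, M *ᵥ v = 0 := by
  obtain ⟨p, q, r, s, rfl⟩ : ∃ p q r s, M = !![p, q; r, s] := ⟨_, _, _, _, eta_fin_two M⟩
  rcases ne_or_eq q 0 with hq | rfl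
  · exact exists_mulVec_eq_zero_of_ddet_eq_zero_of_ne_zero hq h
  rcases ne_or_eq s 0 with hs | rfl
  · obtain ⟨v, hv, hMv⟩ :=
      exists_mulVec_eq_zero_of_ddet_eq_zero_of_ne_zero hs (by rwa [ddet_swap_rows])
    refine ⟨v, hv, ?_⟩
    simpa [and_comm] using hMv
  · exact ⟨![0, 1], by simp, by simp⟩

end DoubleDeterminant

/-- If the Wronskian of two solutions of `x' = A(t) x` on `I = [a,b]` vanishes at some
`t₀ ∈ I`, then the two solutions are right linearly dependent on `I`. -/
theorem right_dep_of_wronskian_eq_zero (a b : ℝ)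
    (A : ℝ → Matrix (Fin 2) (Fin 2) (Quaternion ℝ))
    (hA : ContinuousOn A (Set.Icc a b))
    (x₁ x₂ : ℝ → Fin 2 → Quaternion ℝ)
    (hx₁ : ∀ t ∈ Set.Icc a b, HasDerivAt x₁ ((A t).mulVec (x₁ t)) t)
    (hx₂ : ∀ t ∈ Set.Icc a b, HasDerivAt x₂ ((A t).mulVec (x₂ t)) t)
    (t₀ : ℝ) (ht₀ : t₀ ∈ Set.Icc a b)
    (hW : ddet (Matrix.of fun i j => ![x₁ t₀, x₂ t₀] j i) = 0) :
    ∃ q₁ q₂ : Quaternion ℝ, ¬(q₁ = 0 ∧ q₂ = 0) ∧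
      ∀ t ∈ Set.Icc a b, (fun i => x₁ t i * q₁ + x₂ t i * q₂) = (0 : Fin 2 → Quaternion ℝ) := by
  obtain ⟨v, hv, hWv⟩ := exists_mulVec_eq_zero_of_ddet_eq_zero hW
  refine ⟨v 0, v 1, fun h => hv (funext fun i => by fin_cases i <;> simp [h]), ?_⟩
  have hy₀ : (fun i => x₁ t₀ i * v 0 + x₂ t₀ i * v 1) = 0 := by
    rw [← hWv]
    funext i
    simp [mulVec, dotProduct, Fin.sum_univ_two]
  intro t ht
  exact eqOn_zero_of_hasDerivAt_mulVec hA
    (fun s hs => hasDerivAt_mulVec_mul_const_add_mul_const (hx₁ s hs) (hx₂ s hs) _ _) ht₀ hy₀ ht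
end

section
/- Let I = [a,b], let A : ℝ → M₂(ℍ) be continuous on I, and let M : ℝ → M₂(ℍ) be differentiable with M'(t) = A(t)M(t) for all t ∈ I. If ddet M(t₀) ≠ 0 for some t₀ ∈ I (equivalently M(t₀) is invertible), then ddet M(t) ≠ 0 for every t ∈ I (equivalently M(t) is invertible for every t ∈ I). -/
open Matrix

/-!
`N = M Mᴴ` is Hermitian, so `N = [[a, q], [q̄, b]]` with `a, b` real and `ddet M = ab - |q|²` is
real. Multiplying `N` by `[[b, -q], [-q̄, a]]` gives `(ab - |q|²) • 1`, so `ddet M ≠ 0` iff `N`,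
equivalently `M`, is invertible.

A quaternion matrix is invertible iff `v ↦ M v` is injective. For a fixed `v`, `s ↦ M(s) v` solves
the linear equation `x' = A(s) x`, which is Lipschitz in `x` uniformly on the compact interval, so
by uniqueness a solution vanishing at one time vanishes everywhere: kernels of `M(t)` do not
depend on `t`.
-/

open Quaternion Set

theorem isUnit_mul_star_self_iff {R : Type*} [Monoid R] [StarMul R] [IsDedekindFiniteMonoid R]
    {a : R} : IsUnit (a * star a) ↔ IsUnit a :=
  ⟨isUnit_of_mul_isUnit_left, fun ha => ha.mul ha.star⟩

theorem Matrix.IsHermitian.exists_eq_fin_two {N : Matrix (Fin 2) (Fin 2) ℍ[ℝ]}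
    (hN : N.IsHermitian) : ∃ (a b : ℝ) (q : ℍ[ℝ]), N = !![(a : ℍ[ℝ]), q; star q, b] :=
  ⟨(N 0 0).re, (N 1 1).re, N 0 1, by
    rw [← star_eq_self.1 (hN.apply 0 0), ← star_eq_self.1 (hN.apply 1 1), hN.apply 1 0]
    exact eta_fin_two N⟩

theorem Quaternion.hermitian_fin_two_mul_adj (a b : ℝ) (q : ℍ[ℝ]) :
    !![(a : ℍ[ℝ]), q; star q, b] * !![(b : ℍ[ℝ]), -q; -star q, a] = (a * b - normSq q) • 1 := by
  ext i j : 1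
  fin_cases i <;> fin_cases j <;>
    simp [Matrix.mul_apply, Fin.sum_univ_two, self_mul_star, star_mul_self, ← coe_mul,
      Algebra.smul_def, mul_comm b a, coe_commutes a q, coe_commutes b (star q), neg_add_eq_sub,
      ← sub_eq_add_neg]

theorem Quaternion.isUnit_hermitian_fin_two_iff (a b : ℝ) (q : ℍ[ℝ]) :
    IsUnit !![(a : ℍ[ℝ]), q; star q, b] ↔ a * b - normSq q ≠ 0 := by
  have hadj := hermitian_fin_two_mul_adj a b q
  constructor
  · intro hu hd
    rw [hd, zero_smul, hu.mul_right_eq_zero] at hadj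
    have hb : (b : ℍ[ℝ]) = 0 := congr_fun₂ hadj 0 0
    have hq : -q = 0 := congr_fun₂ hadj 0 1
    have ha : (a : ℍ[ℝ]) = 0 := congr_fun₂ hadj 1 1
    rw [ha, hb, neg_eq_zero.1 hq, star_zero] at hu
    have h0 : !![(0 : ℍ[ℝ]), 0; 0, 0] = 0 := (eta_fin_two 0).symm
    exact not_isUnit_zero (h0 ▸ hu)
  · intro hd
    refine IsUnit.of_mul_eq_one ((a * b - normSq q)⁻¹ • !![(b : ℍ[ℝ]), -q; -star q, a]) ?_
    rw [Matrix.mul_smul, hadj, smul_smul, inv_mul_cancel₀ hd, one_smul]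

theorem isUnit_iff_ddet_ne_zero (M : Matrix (Fin 2) (Fin 2) ℍ[ℝ]) : IsUnit M ↔ ddet M ≠ 0 := by
  obtain ⟨a, b, q, hN⟩ := (isHermitian_mul_conjTranspose_self M).exists_eq_fin_two
  rw [← isUnit_mul_star_self_iff, star_eq_conjTranspose, ddet, hN, isUnit_hermitian_fin_two_iff]
  simp only [of_apply, cons_val', cons_val_zero, cons_val_fin_one, cons_val_one, self_mul_star,
    ← coe_mul, ← coe_sub]
  exact not_congr (coe_injective.eq_iff' coe_zero).symm

theorem Matrix.mulVec_injective_iff_isUnit_of_finiteDimensional (K : Type*) {D : Type*} [Field K]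
    [DivisionRing D] [Algebra K D] [FiniteDimensional K D] {n : Type*} [Fintype n] [DecidableEq n]
    {A : Matrix n n D} : Function.Injective A.mulVec ↔ IsUnit A :=
  ⟨fun h => isUnit_iff_exists_inv.2 <| mulVec_surjective_iff_exists_right_inverse.1 <|
    LinearMap.injective_iff_surjective (f := mulVecBilin K K A).1 h, mulVec_injective_of_isUnit⟩

theorem eqOn_zero_of_hasDerivAt_clm_apply {E : Type*} [NormedAddCommGroup E] [NormedSpace ℝ E]
    {A : ℝ → E →L[ℝ] E} {f : ℝ → E} {a b t₀ : ℝ} (hA : ContinuousOn A (Icc a b))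
    (hf : ∀ t ∈ Icc a b, HasDerivAt f (A t (f t)) t) (ht₀ : t₀ ∈ Icc a b) (hf₀ : f t₀ = 0) :
    EqOn f 0 (Icc a b) := by
  obtain ⟨u, -, hu⟩ :=
    isCompact_Icc.exists_isMaxOn ⟨t₀, ht₀⟩ (continuous_nnnorm.comp_continuousOn hA)
  have hlip : ∀ t ∈ Icc a b, LipschitzOnWith ‖A u‖₊ (A t) univ := fun t ht =>
    ((A t).lipschitz.weaken (hu ht)).lipschitzOnWith
  have hfc : ContinuousOn f (Icc a b) := fun t ht => (hf t ht).continuousAt.continuousWithinAt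
  have h0 : ∀ t, HasDerivAt (0 : ℝ → E) (A t ((0 : ℝ → E) t)) t := fun t => by simp
  intro t ht
  rcases le_total t₀ t with h | h
  · have hsub : Icc t₀ b ⊆ Icc a b := Icc_subset_Icc_left ht₀.1
    have hsub' := Ico_subset_Icc_self.trans hsub
    exact ODE_solution_unique_of_mem_Icc_right (fun s hs => hlip s (hsub' hs)) (hfc.mono hsub)
      (fun s hs => (hf s (hsub' hs)).hasDerivWithinAt) (fun _ _ => mem_univ _) continuousOn_const
      (fun s _ => (h0 s).hasDerivWithinAt) (fun _ _ => mem_univ _) hf₀ ⟨h, ht.2⟩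
  · have hsub : Icc a t₀ ⊆ Icc a b := Icc_subset_Icc_right ht₀.2
    have hsub' := Ioc_subset_Icc_self.trans hsub
    exact ODE_solution_unique_of_mem_Icc_left (fun s hs => hlip s (hsub' hs)) (hfc.mono hsub)
      (fun s hs => (hf s (hsub' hs)).hasDerivWithinAt) (fun _ _ => mem_univ _) continuousOn_const
      (fun s _ => (h0 s).hasDerivWithinAt) (fun _ _ => mem_univ _) hf₀ ⟨ht.1, h⟩

theorem Matrix.hasDerivAt_mulVec_const {R n : Type*} [NormedRing R] [NormedAlgebra ℝ R]
    [Fintype n] {M : ℝ → Matrix n n R} {M' : Matrix n n R} {t : ℝ}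
    (hM : ∀ i j, HasDerivAt (fun s => M s i j) (M' i j) t) (v : n → R) :
    HasDerivAt (fun s => M s *ᵥ v) (M' *ᵥ v) t :=
  hasDerivAt_pi.2 fun i => HasDerivAt.fun_sum fun j _ => (hM i j).mul_const (v j)

theorem Matrix.mulVec_eq_zero_of_hasDerivAt_mul {D n : Type*} [NormedRing D] [NormedAlgebra ℝ D]
    [FiniteDimensional ℝ D] [Fintype n] {A M : ℝ → Matrix n n D} {a b t₀ : ℝ}
    (hA : ContinuousOn A (Icc a b))
    (hM : ∀ t ∈ Icc a b, ∀ i j, HasDerivAt (fun s => M s i j) ((A t * M t) i j) t)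
    (ht₀ : t₀ ∈ Icc a b) {v : n → D} (hv : M t₀ *ᵥ v = 0) : ∀ t ∈ Icc a b, M t *ᵥ v = 0 :=
  eqOn_zero_of_hasDerivAt_clm_apply (A := fun t => (mulVecBilin ℝ ℝ (A t)).toContinuousLinearMap)
    (continuousOn_clm_apply.2 fun x =>
      (continuous_id.matrix_mulVec continuous_const).comp_continuousOn hA)
    (fun t ht => by simpa [mulVec_mulVec] using hasDerivAt_mulVec_const (hM t ht) v) ht₀ hv

/-- If a solution matrix of `x' = A(t) x` on `I = [a,b]` has nonzero double determinant
(equivalently, is invertible) at some `t₀ ∈ I`, then it has nonzero double determinant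
(equivalently, is invertible) at every `t ∈ I`. -/
theorem solutionMatrix_ddet_ne_zero (a b : ℝ)
    (A : ℝ → Matrix (Fin 2) (Fin 2) (Quaternion ℝ))
    (hA : ContinuousOn A (Set.Icc a b))
    (M : ℝ → Matrix (Fin 2) (Fin 2) (Quaternion ℝ))
    (hM : ∀ t ∈ Set.Icc a b, ∀ i j, HasDerivAt (fun s => M s i j) ((A t * M t) i j) t)
    (t₀ : ℝ) (ht₀ : t₀ ∈ Set.Icc a b) (h₀ : ddet (M t₀) ≠ 0) :
    ∀ t ∈ Set.Icc a b, ddet (M t) ≠ 0 ∧ IsUnit (M t) := by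
  intro t ht
  have hunit₀ : IsUnit (M t₀) := (isUnit_iff_ddet_ne_zero _).2 h₀
  have hunit : IsUnit (M t) := by
    refine (mulVec_injective_iff_isUnit_of_finiteDimensional ℝ).1 fun x y hxy => ?_
    have hker : M t *ᵥ (x - y) = 0 := by rw [mulVec_sub, hxy, sub_self]
    have hker₀ := mulVec_eq_zero_of_hasDerivAt_mul hA hM ht hker t₀ ht₀
    exact sub_eq_zero.1 (mulVec_injective_of_isUnit hunit₀ (by rw [hker₀, mulVec_zero]))
  exact ⟨(isUnit_iff_ddet_ne_zero _).1 hunit, hunit⟩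
end
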